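/- Let ρ̄ > 0, ū ∈ ℝ^d, μ > 0, λ+2μ > 0 and set ν = λ+2μ, and let p'(ρ̄) ∈ ℝ. Suppose σ : [0,T]×𝕋_L → ℝ and z : [0,T]×𝕋_L → ℝ^d are smooth and solve the adjoint system −∂_tσ − ū·∇σ − p'(ρ̄) div z = g_σ and −ρ̄(∂_t z + ū·∇z) − μΔz − (λ+μ)∇div z − ρ̄∇σ = g_z in (0,T)×𝕋_L. Define q := ν div z + ρ̄σ. Then (σ,q) solves −∂_tσ − ū·∇σ + (p'(ρ̄)ρ̄/ν)σ = g_σ + (p'(ρ̄)/ν)q and −(ρ̄/ν)(∂_t q + ū·∇q) − Δq − (p'(ρ̄)ρ̄²/ν²)q = div g_z + (ρ̄²/ν)g_σ − (p'(ρ̄)ρ̄³/ν²)σ in (0,T)×𝕋_L. -/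

import Mathlib

open MeasureTheory Set
open scoped ENNReal NNReal

noncomputable section

namespace NSC

abbrev Rd (d : ℕ) := Fin d → ℝ

variable {d : ℕ}

/-- partial derivative in the `i`-th coordinate direction -/
def pd (i : Fin d) (f : Rd d → ℝ) (x : Rd d) : ℝ := fderiv ℝ f x (Pi.single i 1)

/-- directional derivative `v · ∇ f` -/
def dirD (v : Rd d) (f : Rd d → ℝ) (x : Rd d) : ℝ := ∑ i, v i * pd i f x

/-- divergence of a vector field -/
def divg (u : Rd d → Rd d) (x : Rd d) : ℝ := ∑ i, pd i (fun y => u y i) x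

/-- Laplacian -/
def lap (f : Rd d → ℝ) (x : Rd d) : ℝ := ∑ i, pd i (pd i f) x

/-- gradient -/
def grad (f : Rd d → ℝ) (x : Rd d) : Rd d := fun i => pd i f x

/-- Hessian matrix -/
def hess (f : Rd d → ℝ) (x : Rd d) : Fin d → Fin d → ℝ := fun i j => pd i (pd j f) x

/-- time derivative of a time-dependent field -/
def tderiv {F : Type*} [NormedAddCommGroup F] [NormedSpace ℝ F]
    (f : ℝ → Rd d → F) (t : ℝ) (x : Rd d) : F := deriv (fun s => f s x) t

/-- Euclidean length of a vector -/
def enorm2 (v : Rd d) : ℝ := Real.sqrt (∑ i, (v i) ^ 2)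

/-- thickness of a set in the direction `e` -/
def thickness (A : Set (Rd d)) (e : Rd d) : ℝ :=
  sSup {ℓ : ℝ | 0 ≤ ℓ ∧ ∃ x ∈ A, (fun j => x j + ℓ * e j) ∈ A}

/-- `L`-periodicity in each coordinate direction (functions on the torus `𝕋_L`) -/
def Per {F : Type*} (L : ℝ) (f : Rd d → F) : Prop :=
  ∀ (x : Rd d) (i : Fin d), f (x + L • (Pi.single i 1 : Rd d)) = f x

/-- fundamental cell `[0,L]^d` of the torus -/
def cube (d : ℕ) (L : ℝ) : Set (Rd d) := univ.pi fun _ : Fin d => Icc (0 : ℝ) L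

/-- `L²` norm (with values in `ℝ≥0∞`) over a set -/
def eL2 {F : Type*} [NormedAddCommGroup F] (A : Set (Rd d)) (f : Rd d → F) : ℝ≥0∞ :=
  eLpNorm f 2 (volume.restrict A)

/-- `H^k` norm over a set -/
def eHk {F : Type*} [NormedAddCommGroup F] [NormedSpace ℝ F]
    (A : Set (Rd d)) (k : ℕ) (f : Rd d → F) : ℝ≥0∞ :=
  ∑ j ∈ Finset.range (k + 1), eL2 A fun x => iteratedFDeriv ℝ j f x

/-- `L²(0,T)` of an `ℝ≥0∞`-valued function of time -/
def eL2T (T : ℝ) (g : ℝ → ℝ≥0∞) : ℝ≥0∞ :=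
  (∫⁻ t in Ioo (0 : ℝ) T, g t ^ 2) ^ (1 / 2 : ℝ)

/-- `L²(0,T;H^k)` norm -/
def eL2Hk {F : Type*} [NormedAddCommGroup F] [NormedSpace ℝ F]
    (T : ℝ) (A : Set (Rd d)) (k : ℕ) (f : ℝ → Rd d → F) : ℝ≥0∞ :=
  eL2T T fun t => eHk A k (f t)

/-- `C⁰([0,T];H^k)`-type (sup in time) norm -/
def eSupHk {F : Type*} [NormedAddCommGroup F] [NormedSpace ℝ F]
    (T : ℝ) (A : Set (Rd d)) (k : ℕ) (f : ℝ → Rd d → F) : ℝ≥0∞ :=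
  ⨆ t ∈ Icc (0 : ℝ) T, eHk A k (f t)

/-- `H¹(0,T;H^k)` norm -/
def eH1Hk {F : Type*} [NormedAddCommGroup F] [NormedSpace ℝ F]
    (T : ℝ) (A : Set (Rd d)) (k : ℕ) (f : ℝ → Rd d → F) : ℝ≥0∞ :=
  eL2Hk T A k f + eL2Hk T A k fun t x => tderiv f t x

/-- negative Sobolev `H^{-k}` norm on the torus, by duality -/
def eHneg (L : ℝ) (k : ℕ) (f : Rd d → ℝ) : ℝ≥0∞ :=
  ⨆ g : {g : Rd d → ℝ // ContDiff ℝ (⊤ : ℕ∞) g ∧ Per L g ∧ eHk (cube d L) k g ≤ 1},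
    ENNReal.ofReal (∫ x in cube d L, f x * g.1 x)

/-- negative Sobolev `H^{-k}` norm for vector fields -/
def eHnegV (L : ℝ) (k : ℕ) (f : Rd d → Rd d) : ℝ≥0∞ :=
  ⨆ g : {g : Rd d → Rd d // ContDiff ℝ (⊤ : ℕ∞) g ∧ Per L g ∧ eHk (cube d L) k g ≤ 1},
    ENNReal.ofReal (∫ x in cube d L, ∑ i, f x i * g.1 x i)

/-- the Carleman time weight `θ` -/
structure TW (T T0 T1 s lam0 : ℝ) where
  θ : ℝ → ℝ
  c2 : ContDiffOn ℝ 2 θ (Icc 0 T)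
  seg1 : ∀ t ∈ Icc (0 : ℝ) T0, θ t = 1 + (1 - t / T0) ^ (s * lam0 ^ 2 * Real.exp (2 * lam0))
  seg2 : ∀ t ∈ Icc T0 (T - 2 * T1), θ t = 1
  seg3 : ∀ t ∈ Ico (T - T1) T, θ t = 1 / (T - t)
  incr : MonotoneOn θ (Icc (T - 2 * T1) (T - T1))

/-- the Carleman space weight `ψ̃` -/
structure PsiW (d : ℕ) (L T : ℝ) (ub : Rd d) (ω : Set (Rd d)) where
  ψ0 : ℝ → Rd d → ℝ
  c2 : ContDiff ℝ 2 (Function.uncurry ψ0)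
  range01 : ∀ t x, ψ0 t x ∈ Icc (0 : ℝ) 1
  transport : ∀ t x, tderiv ψ0 t x + dirD ub (ψ0 t) x = 0
  per : ∀ t, Per L (ψ0 t)
  gradLB : ∃ c > 0, ∀ t ∈ Icc (0 : ℝ) T, ∀ x ∉ ω, c ≤ enorm2 (grad (ψ0 t) x)

/-- `ψ = ψ̃ + 6` -/
def psiOf (ψ0 : ℝ → Rd d → ℝ) : ℝ → Rd d → ℝ := fun t x => ψ0 t x + 6

/-- the Carleman weight `φ` -/
def phiOf (θ : ℝ → ℝ) (lam0 : ℝ) (ψ0 : ℝ → Rd d → ℝ) : ℝ → Rd d → ℝ := fun t x =>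
  θ t * (lam0 * Real.exp (12 * lam0) - Real.exp (lam0 * psiOf ψ0 t x))

/-- the weight `Φ(t) = θ(t) λ₀ e^{12λ₀}` -/
def PhiOf (θ : ℝ → ℝ) (lam0 : ℝ) : ℝ → ℝ := fun t => θ t * (lam0 * Real.exp (12 * lam0))

/-- the weight `ξ(t,x) = θ(t) e^{λ₀ ψ(t,x)}` -/
def xiOf (θ : ℝ → ℝ) (lam0 : ℝ) (ψ0 : ℝ → Rd d → ℝ) : ℝ → Rd d → ℝ := fun t x =>
  θ t * Real.exp (lam0 * psiOf ψ0 t x)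



/-! ### Auxiliary machinery for the effective viscous flux computation -/

/-- directional derivative of a space-time function -/
def Dv (v : ℝ × Rd d) (g : ℝ × Rd d → ℝ) : ℝ × Rd d → ℝ := fun p => fderiv ℝ g p v

/-- spatial coordinate direction in space-time -/
def epsv (j : Fin d) : ℝ × Rd d := ((0 : ℝ), Pi.single j 1)

/-- time direction in space-time -/
def e0v : ℝ × Rd d := ((1 : ℝ), 0)

/-- space-time divergence-in-space of a family of scalar fields -/
def wOf (Z : Fin d → ℝ × Rd d → ℝ) : ℝ × Rd d → ℝ := fun p => ∑ j, Dv (epsv j) (Z j) p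

lemma Dv_contDiff {g : ℝ × Rd d → ℝ} (hg : ContDiff ℝ (⊤ : ℕ∞) g) (v : ℝ × Rd d) :
    ContDiff ℝ (⊤ : ℕ∞) (Dv v g) :=
  (hg.fderiv_right (by simp)).clm_apply contDiff_const

lemma Dv_comm {g : ℝ × Rd d → ℝ} (hg : ContDiff ℝ (⊤ : ℕ∞) g) (v w : ℝ × Rd d) (p : ℝ × Rd d) :
    Dv v (Dv w g) p = Dv w (Dv v g) p := by
  have hd : Differentiable ℝ (fderiv ℝ g) :=
    (hg.fderiv_right (m := (⊤ : ℕ∞)) (by simp)).differentiable (by simp)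
  have key : ∀ u u' : ℝ × Rd d, Dv u (Dv u' g) p = fderiv ℝ (fderiv ℝ g) p u u' := by
    intro u u'
    have h := fderiv_clm_apply (𝕜 := ℝ) (c := fderiv ℝ g) (u := fun _ => u') (hd p)
      (differentiableAt_const _)
    show fderiv ℝ (fun q => fderiv ℝ g q u') p u = _
    rw [h]
    simp
  rw [key, key]
  exact (hg.contDiffAt.isSymmSndFDerivAt ((by rw [minSmoothness_of_isRCLikeNormedField]; exact WithTop.coe_le_coe.2 le_top))) v w

lemma pd_slice {g : ℝ × Rd d → ℝ} (hg : ContDiff ℝ (⊤ : ℕ∞) g) (t : ℝ) (x : Rd d) (i : Fin d) :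
    pd i (fun y => g (t, y)) x = Dv (epsv i) g (t, x) := by
  have h1 : HasFDerivAt (fun y : Rd d => (t, y))
      (ContinuousLinearMap.inr ℝ ℝ (Rd d)) x := hasFDerivAt_prodMk_right t x
  have h3 := (((hg.differentiable (by simp)) (t, x)).hasFDerivAt).comp x h1
  rw [pd, show (fun y : Rd d => g (t, y)) = g ∘ Prod.mk t from rfl, h3.fderiv]
  rfl

lemma tderiv_slice {g : ℝ × Rd d → ℝ} (hg : ContDiff ℝ (⊤ : ℕ∞) g) (t : ℝ) (x : Rd d) :
    tderiv (fun s y => g (s, y)) t x = Dv e0v g (t, x) := by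
  have h1 : HasFDerivAt (fun s : ℝ => (s, x))
      (ContinuousLinearMap.inl ℝ ℝ (Rd d)) t := hasFDerivAt_prodMk_left t x
  have h3 := ((((hg.differentiable (by simp)) (t, x)).hasFDerivAt).comp t h1).hasDerivAt
  rw [tderiv, show (fun s : ℝ => g (s, x)) = g ∘ fun s => (s, x) from rfl, h3.deriv]
  rfl

lemma Dv_sum {ι : Type*} {s : Finset ι} {F : ι → ℝ × Rd d → ℝ}
    (hF : ∀ j ∈ s, ContDiff ℝ (⊤ : ℕ∞) (F j)) (v p) :
    Dv v (fun q => ∑ j ∈ s, F j q) p = ∑ j ∈ s, Dv v (F j) p := by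
  show fderiv ℝ _ p v = _
  rw [fderiv_fun_sum (fun j hj => ((hF j hj).differentiable (by simp)) p)]
  simp [Dv]

lemma Dv_combo {f g : ℝ × Rd d → ℝ} (hf : ContDiff ℝ (⊤ : ℕ∞) f) (hg : ContDiff ℝ (⊤ : ℕ∞) g)
    (a b : ℝ) (v p) :
    Dv v (fun q => a * f q + b * g q) p = a * Dv v f p + b * Dv v g p := by
  show fderiv ℝ _ p v = _
  rw [fderiv_fun_add ((hf.differentiable (by simp) p).const_mul a)
      ((hg.differentiable (by simp) p).const_mul b),
    fderiv_const_mul (hf.differentiable (by simp) p) a,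
    fderiv_const_mul (hg.differentiable (by simp) p) b]
  simp [Dv]

lemma Dv_shape (v : ℝ × Rd d) (r m lm r2 : ℝ) (u : Fin d → ℝ)
    (A : ℝ × Rd d → ℝ) (B C : Fin d → ℝ × Rd d → ℝ) (W DG : ℝ × Rd d → ℝ)
    (hA : ContDiff ℝ (⊤ : ℕ∞) A) (hB : ∀ j, ContDiff ℝ (⊤ : ℕ∞) (B j)) (hC : ∀ j, ContDiff ℝ (⊤ : ℕ∞) (C j))
    (hW : ContDiff ℝ (⊤ : ℕ∞) W) (hDG : ContDiff ℝ (⊤ : ℕ∞) DG) (p : ℝ × Rd d) :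
    Dv v (fun q => -(r * (A q + ∑ j, u j * B j q)) - m * (∑ j, C j q)
        - lm * W q - r2 * DG q) p
      = -(r * (Dv v A p + ∑ j, u j * Dv v (B j) p)) - m * (∑ j, Dv v (C j) p)
        - lm * Dv v W p - r2 * Dv v DG p := by
  have hA' := ((hA.differentiable (by simp)) p).hasFDerivAt
  have hB' := fun j => (((hB j).differentiable (by simp)) p).hasFDerivAt
  have hC' := fun j => (((hC j).differentiable (by simp)) p).hasFDerivAt
  have hW' := ((hW.differentiable (by simp)) p).hasFDerivAt
  have hDG' := ((hDG.differentiable (by simp)) p).hasFDerivAt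
  have H := ((((((hA'.add (HasFDerivAt.fun_sum fun j (_ : j ∈ Finset.univ) =>
      (hB' j).const_mul (u j))).const_mul r).neg).sub
      ((HasFDerivAt.fun_sum fun j (_ : j ∈ Finset.univ) => hC' j).const_mul m)).sub
      (hW'.const_mul lm)).sub (hDG'.const_mul r2))
  show fderiv ℝ _ p v = _
  rw [show fderiv ℝ (fun q => -(r * (A q + ∑ j, u j * B j q)) - m * (∑ j, C j q)
      - lm * W q - r2 * DG q) p = _ from H.fderiv]
  simp [Dv]
  ring

lemma sum_shape (r m lm r2 : ℝ) (u : Fin d → ℝ) (A : Fin d → ℝ)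
    (B C : Fin d → Fin d → ℝ) (W DG : Fin d → ℝ) :
    ∑ i, (-(r * (A i + ∑ j, u j * B i j)) - m * (∑ j, C i j) - lm * W i - r2 * DG i)
      = -(r * ((∑ i, A i) + ∑ j, u j * (∑ i, B i j))) - m * (∑ j, ∑ i, C i j)
        - lm * (∑ i, W i) - r2 * (∑ i, DG i) := by
  have h1 : ∑ j, u j * (∑ i, B i j) = ∑ i, ∑ j, u j * B i j := by
    rw [Finset.sum_comm]
    exact Finset.sum_congr rfl fun j _ => by rw [Finset.mul_sum]
  have h2 : (∑ j, ∑ i, C i j) = ∑ i, ∑ j, C i j := Finset.sum_comm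
  rw [h1, h2]
  simp only [Finset.sum_sub_distrib, Finset.sum_add_distrib, Finset.sum_neg_distrib,
    ← Finset.mul_sum]

lemma scal (ρb μ lam pp a0 U1 Lw LG b0 U2 RZ W Gp Gsp : ℝ) (hν : lam + 2 * μ ≠ 0)
    (S2 : -(ρb * (a0 + U1)) - μ * Lw - (lam + μ) * Lw - ρb * LG = RZ)
    (H1 : -b0 - U2 - pp * W = Gsp) :
    -(ρb / (lam + 2 * μ) * (((lam + 2 * μ) * a0 + ρb * b0)
        + ((lam + 2 * μ) * U1 + ρb * U2))) - ((lam + 2 * μ) * Lw + ρb * LG)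
      - pp * ρb ^ 2 / (lam + 2 * μ) ^ 2 * ((lam + 2 * μ) * W + ρb * Gp)
    = RZ + ρb ^ 2 / (lam + 2 * μ) * Gsp - pp * ρb ^ 3 / (lam + 2 * μ) ^ 2 * Gp := by
  subst S2 H1
  field_simp
  ring

lemma key (T ρb μ lam pp : ℝ) (hν : lam + 2 * μ ≠ 0) (ub : Fin d → ℝ)
    (G Gs : ℝ × Rd d → ℝ) (Z GZ' : Fin d → ℝ × Rd d → ℝ)
    (hG : ContDiff ℝ (⊤ : ℕ∞) G) (hZ : ∀ i, ContDiff ℝ (⊤ : ℕ∞) (Z i))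
    (H1 : ∀ p : ℝ × Rd d, p.1 ∈ Set.Ioo 0 T →
      -Dv e0v G p - (∑ j, ub j * Dv (epsv j) G p) - pp * wOf Z p = Gs p)
    (H2 : ∀ p : ℝ × Rd d, p.1 ∈ Set.Ioo 0 T → ∀ i,
      -(ρb * (Dv e0v (Z i) p + ∑ j, ub j * Dv (epsv j) (Z i) p))
        - μ * (∑ j, Dv (epsv j) (Dv (epsv j) (Z i)) p)
        - (lam + μ) * Dv (epsv i) (wOf Z) p - ρb * Dv (epsv i) G p = GZ' i p) :
    ∀ p : ℝ × Rd d, p.1 ∈ Set.Ioo 0 T →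
      -(ρb / (lam + 2 * μ) * (Dv e0v (fun q => (lam + 2 * μ) * wOf Z q + ρb * G q) p
          + ∑ j, ub j * Dv (epsv j) (fun q => (lam + 2 * μ) * wOf Z q + ρb * G q) p))
        - (∑ i, Dv (epsv i) (Dv (epsv i) (fun q => (lam + 2 * μ) * wOf Z q + ρb * G q)) p)
        - pp * ρb ^ 2 / (lam + 2 * μ) ^ 2 * ((lam + 2 * μ) * wOf Z p + ρb * G p)
      = (∑ i, Dv (epsv i) (GZ' i) p) + ρb ^ 2 / (lam + 2 * μ) * Gs p
        - pp * ρb ^ 3 / (lam + 2 * μ) ^ 2 * G p := by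
  intro p hp
  have hw : ContDiff ℝ (⊤ : ℕ∞) (wOf Z) := ContDiff.sum fun j _ => Dv_contDiff (hZ j) _
  have hwv : ∀ v, ContDiff ℝ (⊤ : ℕ∞) (Dv v (wOf Z)) := fun v => Dv_contDiff hw v
  -- differentiate H2 in direction epsv i
  have hopen : IsOpen {q : ℝ × Rd d | q.1 ∈ Set.Ioo 0 T} :=
    isOpen_Ioo.preimage continuous_fst
  have H3 : ∀ i : Fin d,
      Dv (epsv i) (fun q => -(ρb * (Dv e0v (Z i) q + ∑ j, ub j * Dv (epsv j) (Z i) q))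
        - μ * (∑ j, Dv (epsv j) (Dv (epsv j) (Z i)) q)
        - (lam + μ) * Dv (epsv i) (wOf Z) q - ρb * Dv (epsv i) G q) p
      = Dv (epsv i) (GZ' i) p := by
    intro i
    have hev : (fun q => -(ρb * (Dv e0v (Z i) q + ∑ j, ub j * Dv (epsv j) (Z i) q))
        - μ * (∑ j, Dv (epsv j) (Dv (epsv j) (Z i)) q)
        - (lam + μ) * Dv (epsv i) (wOf Z) q - ρb * Dv (epsv i) G q) =ᶠ[nhds p] GZ' i := by
      filter_upwards [hopen.mem_nhds hp] with q hq using H2 q hq i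
    exact congrFun (congrArg (fun (L : (ℝ × Rd d) →L[ℝ] ℝ) => ⇑L) hev.fderiv_eq) (epsv i)
  -- expand via Dv_shape
  have S2i : ∀ i : Fin d,
      -(ρb * (Dv (epsv i) (Dv e0v (Z i)) p
          + ∑ j, ub j * Dv (epsv i) (Dv (epsv j) (Z i)) p))
        - μ * (∑ j, Dv (epsv i) (Dv (epsv j) (Dv (epsv j) (Z i))) p)
        - (lam + μ) * Dv (epsv i) (Dv (epsv i) (wOf Z)) p
        - ρb * Dv (epsv i) (Dv (epsv i) G) p = Dv (epsv i) (GZ' i) p := by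
    intro i
    rw [← Dv_shape (epsv i) ρb μ (lam + μ) ρb ub (Dv e0v (Z i))
      (fun j => Dv (epsv j) (Z i)) (fun j => Dv (epsv j) (Dv (epsv j) (Z i)))
      (Dv (epsv i) (wOf Z)) (Dv (epsv i) G)
      (Dv_contDiff (hZ i) _) (fun j => Dv_contDiff (hZ i) _)
      (fun j => Dv_contDiff (Dv_contDiff (hZ i) _) _) (Dv_contDiff hw _)
      (Dv_contDiff hG _) p]
    exact H3 i
  -- commute derivatives inside S2i
  have S2i' : ∀ i : Fin d,
      -(ρb * (Dv e0v (Dv (epsv i) (Z i)) p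
          + ∑ j, ub j * Dv (epsv j) (Dv (epsv i) (Z i)) p))
        - μ * (∑ j, Dv (epsv j) (Dv (epsv j) (Dv (epsv i) (Z i))) p)
        - (lam + μ) * Dv (epsv i) (Dv (epsv i) (wOf Z)) p
        - ρb * Dv (epsv i) (Dv (epsv i) G) p = Dv (epsv i) (GZ' i) p := by
    intro i
    have cA : Dv e0v (Dv (epsv i) (Z i)) p = Dv (epsv i) (Dv e0v (Z i)) p :=
      Dv_comm (hZ i) e0v (epsv i) p
    have cB : ∀ j : Fin d, Dv (epsv j) (Dv (epsv i) (Z i)) p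
        = Dv (epsv i) (Dv (epsv j) (Z i)) p := fun j => Dv_comm (hZ i) _ _ p
    have cC : ∀ j : Fin d, Dv (epsv j) (Dv (epsv j) (Dv (epsv i) (Z i))) p
        = Dv (epsv i) (Dv (epsv j) (Dv (epsv j) (Z i))) p := by
      intro j
      rw [show Dv (epsv j) (Dv (epsv i) (Z i)) = Dv (epsv i) (Dv (epsv j) (Z i)) from
        funext fun q => Dv_comm (hZ i) _ _ q]
      exact Dv_comm (Dv_contDiff (hZ i) (epsv j)) (epsv j) (epsv i) p
    have hB2 : (∑ j, ub j * Dv (epsv j) (Dv (epsv i) (Z i)) p)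
        = ∑ j, ub j * Dv (epsv i) (Dv (epsv j) (Z i)) p :=
      Finset.sum_congr rfl fun j _ => by rw [cB j]
    have hC2 : (∑ j, Dv (epsv j) (Dv (epsv j) (Dv (epsv i) (Z i))) p)
        = ∑ j, Dv (epsv i) (Dv (epsv j) (Dv (epsv j) (Z i))) p :=
      Finset.sum_congr rfl fun j _ => cC j
    rw [cA, hB2, hC2]
    exact S2i i
  -- sum over i
  have S2sum := Finset.sum_congr rfl fun i (_ : i ∈ Finset.univ) => S2i' i
  rw [sum_shape ρb μ (lam + μ) ρb ub
    (fun i => Dv e0v (Dv (epsv i) (Z i)) p)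
    (fun i j => Dv (epsv j) (Dv (epsv i) (Z i)) p)
    (fun i j => Dv (epsv j) (Dv (epsv j) (Dv (epsv i) (Z i))) p)
    (fun i => Dv (epsv i) (Dv (epsv i) (wOf Z)) p)
    (fun i => Dv (epsv i) (Dv (epsv i) G) p)] at S2sum
  -- identify summed atoms with w-atoms
  have tA : (∑ i, Dv e0v (Dv (epsv i) (Z i)) p) = Dv e0v (wOf Z) p :=
    (Dv_sum (F := fun i => Dv (epsv i) (Z i))
      (fun i _ => Dv_contDiff (hZ i) (epsv i)) e0v p).symm
  have tB : ∀ j : Fin d, (∑ i, Dv (epsv j) (Dv (epsv i) (Z i)) p) = Dv (epsv j) (wOf Z) p :=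
    fun j => (Dv_sum (F := fun i => Dv (epsv i) (Z i))
      (fun i _ => Dv_contDiff (hZ i) (epsv i)) (epsv j) p).symm
  have tC : ∀ j : Fin d, (∑ i, Dv (epsv j) (Dv (epsv j) (Dv (epsv i) (Z i))) p)
      = Dv (epsv j) (Dv (epsv j) (wOf Z)) p := by
    intro j
    rw [show Dv (epsv j) (wOf Z) = fun q => ∑ i, Dv (epsv j) (Dv (epsv i) (Z i)) q from
      funext fun q => Dv_sum (F := fun i => Dv (epsv i) (Z i))
        (fun i _ => Dv_contDiff (hZ i) (epsv i)) (epsv j) q]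
    rw [Dv_sum (F := fun i => Dv (epsv j) (Dv (epsv i) (Z i)))
        (fun i _ => Dv_contDiff (Dv_contDiff (hZ i) (epsv i)) (epsv j)) (epsv j) p]
  have tBsum : (∑ j, ub j * (∑ i, Dv (epsv j) (Dv (epsv i) (Z i)) p))
      = ∑ j, ub j * Dv (epsv j) (wOf Z) p :=
    Finset.sum_congr rfl fun j _ => by rw [tB j]
  have tCsum : (∑ j, ∑ i, Dv (epsv j) (Dv (epsv j) (Dv (epsv i) (Z i))) p)
      = ∑ j, Dv (epsv j) (Dv (epsv j) (wOf Z)) p :=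
    Finset.sum_congr rfl fun j _ => tC j
  rw [tA, tBsum, tCsum] at S2sum
  -- expand Q-atoms in the goal
  have qv : ∀ v, Dv v (fun q => (lam + 2 * μ) * wOf Z q + ρb * G q) p
      = (lam + 2 * μ) * Dv v (wOf Z) p + ρb * Dv v G p :=
    fun v => Dv_combo hw hG _ _ v p
  have qvv : ∀ i : Fin d, Dv (epsv i) (Dv (epsv i) (fun q => (lam + 2 * μ) * wOf Z q + ρb * G q)) p
      = (lam + 2 * μ) * Dv (epsv i) (Dv (epsv i) (wOf Z)) p
        + ρb * Dv (epsv i) (Dv (epsv i) G) p := by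
    intro i
    rw [show Dv (epsv i) (fun q => (lam + 2 * μ) * wOf Z q + ρb * G q)
        = fun q => (lam + 2 * μ) * Dv (epsv i) (wOf Z) q + ρb * Dv (epsv i) G q from
      funext fun q => Dv_combo hw hG _ _ _ q]
    exact Dv_combo (hwv _) (Dv_contDiff hG _) _ _ _ p
  have qsum1 : (∑ j, ub j * Dv (epsv j) (fun q => (lam + 2 * μ) * wOf Z q + ρb * G q) p)
      = ∑ j, ub j * ((lam + 2 * μ) * Dv (epsv j) (wOf Z) p + ρb * Dv (epsv j) G p) :=
    Finset.sum_congr rfl fun j _ => by rw [qv (epsv j)]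
  have qsum2 : (∑ i, Dv (epsv i) (Dv (epsv i)
        (fun q => (lam + 2 * μ) * wOf Z q + ρb * G q)) p)
      = ∑ i, ((lam + 2 * μ) * Dv (epsv i) (Dv (epsv i) (wOf Z)) p
        + ρb * Dv (epsv i) (Dv (epsv i) G) p) :=
    Finset.sum_congr rfl fun i _ => qvv i
  rw [qv e0v, qsum1, qsum2]
  -- final algebra
  have hH1 := H1 p hp
  have expand1 : ∑ j, ub j * ((lam + 2 * μ) * Dv (epsv j) (wOf Z) p + ρb * Dv (epsv j) G p)
      = (lam + 2 * μ) * (∑ j, ub j * Dv (epsv j) (wOf Z) p)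
        + ρb * (∑ j, ub j * Dv (epsv j) G p) := by
    rw [Finset.mul_sum, Finset.mul_sum, ← Finset.sum_add_distrib]
    exact Finset.sum_congr rfl fun j _ => by ring
  have expand2 : ∑ i, ((lam + 2 * μ) * Dv (epsv i) (Dv (epsv i) (wOf Z)) p
        + ρb * Dv (epsv i) (Dv (epsv i) G) p)
      = (lam + 2 * μ) * (∑ i, Dv (epsv i) (Dv (epsv i) (wOf Z)) p)
        + ρb * (∑ i, Dv (epsv i) (Dv (epsv i) G) p) := by
    rw [Finset.mul_sum, Finset.mul_sum, ← Finset.sum_add_distrib]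
  rw [expand1, expand2]
  exact scal _ _ _ _ _ _ _ _ _ _ _ _ _ _ hν S2sum hH1


/-- the effective-viscous-flux variable `q = ν div z + ρ̄ σ` turns the adjoint
system into a weakly coupled transport/parabolic system in `(σ,q)`. -/
theorem effective_viscous_flux_system
    (d : ℕ) (hd : d = 2 ∨ d = 3) (L T : ℝ) (hT : 0 < T) (hL : 0 < L)
    (ρb μ lam pp : ℝ) (hρb : 0 < ρb) (hμ : 0 < μ) (hν : 0 < lam + 2 * μ)
    (ub : Rd d)
    (σ : ℝ → Rd d → ℝ) (z : ℝ → Rd d → Rd d)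
    (gσ : ℝ → Rd d → ℝ) (gz : ℝ → Rd d → Rd d)
    (hσ : ContDiff ℝ (⊤ : ℕ∞) (Function.uncurry σ)) (hz : ContDiff ℝ (⊤ : ℕ∞) (Function.uncurry z))
    (hgσ : ContDiff ℝ (⊤ : ℕ∞) (Function.uncurry gσ)) (hgz : ContDiff ℝ (⊤ : ℕ∞) (Function.uncurry gz))
    (hσper : ∀ t, Per L (σ t)) (hzper : ∀ t, Per L (z t))
    (heq1 : ∀ t ∈ Ioo (0 : ℝ) T, ∀ x : Rd d,
      -tderiv σ t x - dirD ub (σ t) x - pp * divg (z t) x = gσ t x)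
    (heq2 : ∀ t ∈ Ioo (0 : ℝ) T, ∀ x : Rd d, ∀ i : Fin d,
      -(ρb * (tderiv (fun τ y => z τ y i) t x + dirD ub (fun y => z t y i) x))
        - μ * lap (fun y => z t y i) x
        - (lam + μ) * pd i (fun y => divg (z t) y) x
        - ρb * pd i (σ t) x = gz t x i) :
    ∀ q : ℝ → Rd d → ℝ,
      (q = fun t x => (lam + 2 * μ) * divg (z t) x + ρb * σ t x) →
      (∀ t ∈ Ioo (0 : ℝ) T, ∀ x : Rd d,
        -tderiv σ t x - dirD ub (σ t) x + pp * ρb / (lam + 2 * μ) * σ t x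
          = gσ t x + pp / (lam + 2 * μ) * q t x) ∧
      (∀ t ∈ Ioo (0 : ℝ) T, ∀ x : Rd d,
        -(ρb / (lam + 2 * μ) * (tderiv q t x + dirD ub (q t) x)) - lap (q t) x
            - pp * ρb ^ 2 / (lam + 2 * μ) ^ 2 * q t x
          = divg (gz t) x + ρb ^ 2 / (lam + 2 * μ) * gσ t x
            - pp * ρb ^ 3 / (lam + 2 * μ) ^ 2 * σ t x) := by
  intro q hq
  subst hq
  have hν' : (lam + 2 * μ) ≠ 0 := ne_of_gt hν
  -- joint space-time functions
  have hG : ContDiff ℝ (⊤ : ℕ∞) (Function.uncurry σ) := hσ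
  have hZ : ∀ i : Fin d, ContDiff ℝ (⊤ : ℕ∞) (fun p : ℝ × Rd d => z p.1 p.2 i) :=
    fun i => contDiff_pi.1 hz i
  have hGZ : ∀ i : Fin d, ContDiff ℝ (⊤ : ℕ∞) (fun p : ℝ × Rd d => gz p.1 p.2 i) :=
    fun i => contDiff_pi.1 hgz i
  set G : ℝ × Rd d → ℝ := Function.uncurry σ with hGdef
  set Z : Fin d → ℝ × Rd d → ℝ := fun i p => z p.1 p.2 i with hZdef
  set GZ : Fin d → ℝ × Rd d → ℝ := fun i p => gz p.1 p.2 i with hGZdef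
  have hw : ContDiff ℝ (⊤ : ℕ∞) (wOf Z) := ContDiff.sum fun j _ => Dv_contDiff (hZ j) _
  -- divergence bridge
  have bdiv : ∀ (s : ℝ) (y : Rd d), divg (z s) y = wOf Z (s, y) := by
    intro s y
    exact Finset.sum_congr rfl fun i _ => pd_slice (hZ i) s y i
  -- σ bridges
  have bσt : ∀ (s : ℝ) (y : Rd d), tderiv σ s y = Dv e0v G (s, y) :=
    fun s y => tderiv_slice hG s y
  have bσp : ∀ (s : ℝ) (y : Rd d) (i : Fin d), pd i (σ s) y = Dv (epsv i) G (s, y) :=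
    fun s y i => pd_slice hG s y i
  have bσd : ∀ (s : ℝ) (y : Rd d), dirD ub (σ s) y = ∑ j, ub j * Dv (epsv j) G (s, y) :=
    fun s y => Finset.sum_congr rfl fun j _ => by rw [bσp s y j]
  constructor
  · -- transport equation for σ
    intro t ht x
    have h := heq1 t ht x
    field_simp
    linear_combination (lam + 2 * μ) * h
  · -- parabolic equation for q
    intro t ht x
    -- hypotheses in space-time form
    have H1 : ∀ p : ℝ × Rd d, p.1 ∈ Ioo 0 T →
        -Dv e0v G p - (∑ j, ub j * Dv (epsv j) G p) - pp * wOf Z p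
          = Function.uncurry gσ p := by
      rintro ⟨s, y⟩ hs
      have h := heq1 s hs y
      rw [bσt s y, bσd s y, bdiv s y] at h
      exact h
    have H2 : ∀ p : ℝ × Rd d, p.1 ∈ Ioo 0 T → ∀ i : Fin d,
        -(ρb * (Dv e0v (Z i) p + ∑ j, ub j * Dv (epsv j) (Z i) p))
          - μ * (∑ j, Dv (epsv j) (Dv (epsv j) (Z i)) p)
          - (lam + μ) * Dv (epsv i) (wOf Z) p - ρb * Dv (epsv i) G p = GZ i p := by
      rintro ⟨s, y⟩ hs i
      have h := heq2 s hs y i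
      have e1 : tderiv (fun τ y' => z τ y' i) s y = Dv e0v (Z i) (s, y) :=
        tderiv_slice (hZ i) s y
      have e2 : dirD ub (fun y' => z s y' i) y = ∑ j, ub j * Dv (epsv j) (Z i) (s, y) :=
        Finset.sum_congr rfl fun j _ => by
          rw [show pd j (fun y' => z s y' i) y = Dv (epsv j) (Z i) (s, y) from
            pd_slice (hZ i) s y j]
      have e3 : lap (fun y' => z s y' i) y
          = ∑ j, Dv (epsv j) (Dv (epsv j) (Z i)) (s, y) := by
        refine Finset.sum_congr rfl fun j _ => ?_
        rw [show pd j (fun y' => z s y' i) = fun y' => Dv (epsv j) (Z i) (s, y') from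
          funext fun y' => pd_slice (hZ i) s y' j]
        exact pd_slice (Dv_contDiff (hZ i) (epsv j)) s y j
      have e4 : pd i (fun y' => divg (z s) y') y = Dv (epsv i) (wOf Z) (s, y) := by
        rw [show (fun y' => divg (z s) y') = fun y' => wOf Z (s, y') from
          funext fun y' => bdiv s y']
        exact pd_slice hw s y i
      have e5 : pd i (σ s) y = Dv (epsv i) G (s, y) := bσp s y i
      rw [e1, e2, e3, e4, e5] at h
      exact h
    have KEY := key T ρb μ lam pp hν' ub G (Function.uncurry gσ) Z GZ hG hZ H1 H2 (t, x) ht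
    -- bridge the goal to KEY
    have hqQ : ∀ (s : ℝ) (y : Rd d),
        (lam + 2 * μ) * divg (z s) y + ρb * σ s y
          = (lam + 2 * μ) * wOf Z (s, y) + ρb * G (s, y) := by
      intro s y
      rw [bdiv s y]
      rfl
    have hQ : ContDiff ℝ (⊤ : ℕ∞) (fun p : ℝ × Rd d => (lam + 2 * μ) * wOf Z p + ρb * G p) :=
      (contDiff_const.mul hw).add (contDiff_const.mul hG)
    have b1 : tderiv (fun s y => (lam + 2 * μ) * divg (z s) y + ρb * σ s y) t x
        = Dv e0v (fun p => (lam + 2 * μ) * wOf Z p + ρb * G p) (t, x) := by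
      rw [show (fun s y => (lam + 2 * μ) * divg (z s) y + ρb * σ s y)
          = fun s y => (lam + 2 * μ) * wOf Z (s, y) + ρb * G (s, y) from
        funext fun s => funext fun y => hqQ s y]
      exact tderiv_slice hQ t x
    have bfun : ∀ s : ℝ, (fun y => (lam + 2 * μ) * divg (z s) y + ρb * σ s y)
        = fun y => (lam + 2 * μ) * wOf Z (s, y) + ρb * G (s, y) :=
      fun s => funext fun y => hqQ s y
    have b2 : dirD ub (fun y => (lam + 2 * μ) * divg (z t) y + ρb * σ t y) x
        = ∑ j, ub j * Dv (epsv j) (fun p => (lam + 2 * μ) * wOf Z p + ρb * G p) (t, x) := by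
      refine Finset.sum_congr rfl fun j _ => ?_
      rw [show pd j (fun y => (lam + 2 * μ) * divg (z t) y + ρb * σ t y) x
          = Dv (epsv j) (fun p => (lam + 2 * μ) * wOf Z p + ρb * G p) (t, x) from by
        rw [bfun t]; exact pd_slice hQ t x j]
    have b3 : lap (fun y => (lam + 2 * μ) * divg (z t) y + ρb * σ t y) x
        = ∑ i, Dv (epsv i) (Dv (epsv i)
            (fun p => (lam + 2 * μ) * wOf Z p + ρb * G p)) (t, x) := by
      refine Finset.sum_congr rfl fun i _ => ?_
      rw [bfun t]
      rw [show pd i (fun y => (lam + 2 * μ) * wOf Z (t, y) + ρb * G (t, y))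
          = fun y => Dv (epsv i) (fun p => (lam + 2 * μ) * wOf Z p + ρb * G p) (t, y) from
        funext fun y => pd_slice hQ t y i]
      exact pd_slice (Dv_contDiff hQ (epsv i)) t x i
    have b5 : divg (gz t) x = ∑ i, Dv (epsv i) (GZ i) (t, x) :=
      Finset.sum_congr rfl fun i _ => pd_slice (hGZ i) t x i
    beta_reduce
    rw [b1, b2, b3, b5, hqQ t x]
    exact KEY


end NSC
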